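/- Let g', b be natural numbers, m ≥ 1, let h : Fin b → ZMod m, and set m₀ = Nat.gcd m (Finset.univ.gcd (fun k => (h k).val)). There exists a surjective group homomorphism ψ : Ξ_{g',b} →* Multiplicative (ZMod m) with ψ(γ_k) = Multiplicative.ofAdd (h k) for all k, if and only if ∑_k h k = 0 in ZMod m and (g' ≥ 1 or m₀ = 1). -/

import Mathlib

open scoped commutatorElement in
/-- The single relator `(∏_j [A_j, B_j]) · γ_1 ⋯ γ_b` in the free group on
`(Fin g' ⊕ Fin g') ⊕ Fin b`, where `A_j`, `B_j`, `γ_k` are the free generators indexed by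
the left, middle and right summands, products taken in the order of the indices. -/
def surfaceRelator (g' b : ℕ) : FreeGroup ((Fin g' ⊕ Fin g') ⊕ Fin b) :=
  (List.ofFn fun j : Fin g' =>
      ⁅(FreeGroup.of (Sum.inl (Sum.inl j)) : FreeGroup ((Fin g' ⊕ Fin g') ⊕ Fin b)),
        FreeGroup.of (Sum.inl (Sum.inr j))⁆).prod *
  (List.ofFn fun k : Fin b =>
      (FreeGroup.of (Sum.inr k) : FreeGroup ((Fin g' ⊕ Fin g') ⊕ Fin b))).prod

/-- The fundamental group `Ξ_{g',b}` of a genus `g'` surface with `b` punctures, presented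
with generators `A_j, B_j (j < g')`, `γ_k (k < b)` and the single surface relator. -/
abbrev SurfaceGroup (g' b : ℕ) : Type :=
  PresentedGroup ({surfaceRelator g' b} : Set (FreeGroup ((Fin g' ⊕ Fin g') ⊕ Fin b)))

/-- The image `γ_k` of the `k`-th puncture generator in `Ξ_{g',b}`. -/
def SurfaceGroup.gamma {g' b : ℕ} (k : Fin b) : SurfaceGroup g' b :=
  PresentedGroup.of (Sum.inr k)

/-! Homomorphisms from `Ξ_{g',b}` to an abelian group kill the commutators, so they are given by
arbitrary values on the `A_j`, `B_j` and values on the `γ_k` whose product is one; this is the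
condition `∑ h_k = 0`. If `g' ≥ 1`, sending `A_1` to the generator `1` makes `ψ` onto. If
`g' = 0`, the `γ_k` generate `Ξ_{0,b}`, so `ψ` is onto iff the `h_k` generate `ℤ/mℤ`; by Bézout
this holds when `gcd(m, h_1, …, h_b) = 1`, and conversely all `h_k` vanish modulo that gcd. -/

theorem map_surfaceRelator {g' b : ℕ} {M : Type*} [CommGroup M]
    (φ : FreeGroup ((Fin g' ⊕ Fin g') ⊕ Fin b) →* M) :
    φ (surfaceRelator g' b) = ∏ k, φ (FreeGroup.of (Sum.inr k)) := by
  simp [surfaceRelator, map_list_prod, List.prod_ofFn, commutatorElement_def]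

namespace SurfaceGroup

variable {g' b : ℕ} {M : Type*} [CommGroup M]

theorem prod_map_gamma (ψ : SurfaceGroup g' b →* M) : ∏ k, ψ (gamma k) = 1 := by
  have h := map_surfaceRelator (ψ.comp (PresentedGroup.mk _))
  rw [MonoidHom.comp_apply, PresentedGroup.one_of_mem (Set.mem_singleton _), map_one] at h
  exact h.symm

def lift (f : (Fin g' ⊕ Fin g') ⊕ Fin b → M) (hf : ∏ k, f (Sum.inr k) = 1) :
    SurfaceGroup g' b →* M :=
  PresentedGroup.toGroup (f := f) <| by
    rintro r rfl
    simpa [map_surfaceRelator] using hf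

@[simp]
theorem lift_of (f : (Fin g' ⊕ Fin g') ⊕ Fin b → M) (hf : ∏ k, f (Sum.inr k) = 1)
    (x : (Fin g' ⊕ Fin g') ⊕ Fin b) :
    lift f hf (PresentedGroup.of x) = f x :=
  PresentedGroup.toGroup.of _

theorem closure_range_gamma :
    Subgroup.closure (Set.range (gamma : Fin b → SurfaceGroup 0 b)) = ⊤ :=
  eq_top_iff.2 fun x _ => PresentedGroup.generated_by _ _
    (by rintro ((j | j) | k); exacts [j.elim0, j.elim0, Subgroup.subset_closure ⟨k, rfl⟩]) x

theorem range_eq_closure_range_gamma {G : Type*} [Group G] (ψ : SurfaceGroup 0 b →* G) :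
    ψ.range = Subgroup.closure (Set.range (ψ ∘ gamma)) := by
  rw [Set.range_comp, ← MonoidHom.map_closure, closure_range_gamma, MonoidHom.range_eq_map]

end SurfaceGroup

theorem Subgroup.closure_range_ofAdd_eq_top_iff {A ι : Type*} [AddGroup A] (f : ι → A) :
    Subgroup.closure (Set.range (Multiplicative.ofAdd ∘ f)) = ⊤ ↔
      AddSubgroup.closure (Set.range f) = ⊤ := by
  rw [← AddSubgroup.toSubgroup.injective.eq_iff, AddSubgroup.toSubgroup_closure, map_top,
    Set.range_comp, Equiv.image_eq_preimage_symm]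
  rfl

theorem AddSubgroup.natCast_gcd_mem {R : Type*} [Ring R] (S : AddSubgroup R) {a b : ℕ}
    (ha : (a : R) ∈ S) (hb : (b : R) ∈ S) : (Nat.gcd a b : R) ∈ S := by
  rw [← Int.cast_natCast, Nat.gcd_eq_gcd_ab]
  simpa [zsmul_eq_mul, mul_comm] using
    add_mem (S.zsmul_mem ha (a.gcdA b)) (S.zsmul_mem hb (a.gcdB b))

theorem AddSubgroup.natCast_finset_gcd_mem {R ι : Type*} [Ring R] (S : AddSubgroup R)
    (s : Finset ι) (f : ι → ℕ) (hf : ∀ i ∈ s, (f i : R) ∈ S) : ((s.gcd f : ℕ) : R) ∈ S := by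
  induction s using Finset.cons_induction with
  | empty => simp
  | cons i s hi ih =>
    rw [Finset.gcd_cons]
    simp only [Finset.mem_cons, forall_eq_or_imp] at hf
    exact S.natCast_gcd_mem hf.1 (ih hf.2)

theorem ZMod.addSubgroup_eq_top_of_isUnit_mem {m : ℕ} [NeZero m] {S : AddSubgroup (ZMod m)}
    {u : ZMod m} (hu : IsUnit u) (huS : u ∈ S) : S = ⊤ := by
  refine eq_top_iff.2 fun x _ => ?_
  have hx : x = (x * ↑hu.unit⁻¹).val • u := by
    rw [nsmul_eq_mul, ZMod.natCast_zmod_val, mul_assoc, IsUnit.val_inv_mul, mul_one]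
  rw [hx]
  exact S.nsmul_mem huS _

theorem ZMod.closure_range_eq_top_iff {m : ℕ} [NeZero m] {ι : Type*} [Fintype ι]
    (h : ι → ZMod m) :
    AddSubgroup.closure (Set.range h) = ⊤ ↔
      Nat.Coprime m (Finset.univ.gcd fun i => (h i).val) := by
  set G := Finset.univ.gcd fun i => (h i).val
  constructor
  · intro htop
    let π := ZMod.castHom (Nat.gcd_dvd_left m G) (ZMod (Nat.gcd m G))
    have hle : AddSubgroup.closure (Set.range h) ≤ π.toAddMonoidHom.ker := by
      refine (AddSubgroup.closure_le _).2 ?_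
      rintro _ ⟨i, rfl⟩
      have hdvd : Nat.gcd m G ∣ (h i).val :=
        (Nat.gcd_dvd_right m G).trans (Finset.gcd_dvd (Finset.mem_univ i))
      rw [SetLike.mem_coe, AddMonoidHom.mem_ker, RingHom.toAddMonoidHom_eq_coe,
        AddMonoidHom.coe_coe, ZMod.castHom_apply, ZMod.cast_eq_val, ZMod.natCast_eq_zero_iff]
      exact hdvd
    have h1 : π 1 = 0 := hle (htop ▸ AddSubgroup.mem_top 1)
    rwa [map_one, ZMod.one_eq_zero_iff] at h1
  · intro hcop
    refine ZMod.addSubgroup_eq_top_of_isUnit_mem ((ZMod.isUnit_iff_coprime G m).2 hcop.symm) ?_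
    refine AddSubgroup.natCast_finset_gcd_mem _ _ _ fun i _ => ?_
    rw [ZMod.natCast_zmod_val]
    exact AddSubgroup.subset_closure ⟨i, rfl⟩

/-- There is a surjection `ψ : Ξ_{g',b} → ℤ/mℤ` with `ψ(γ_k) = h_k` for all `k` iff
`∑ h_k = 0` in `ℤ/mℤ` and moreover `g' ≥ 1` or `gcd(m, h₁, …, h_b) = 1`. -/
theorem exists_surjection_surfaceGroup_zmod_iff (g' b m : ℕ) (hm : 1 ≤ m)
    (h : Fin b → ZMod m) :
    (∃ ψ : SurfaceGroup g' b →* Multiplicative (ZMod m),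
        Function.Surjective ψ ∧
          ∀ k : Fin b, ψ (SurfaceGroup.gamma k) = Multiplicative.ofAdd (h k)) ↔
      (∑ k, h k = 0 ∧
        (1 ≤ g' ∨ Nat.gcd m (Finset.univ.gcd fun k => (h k).val) = 1)) := by
  have : NeZero m := ⟨by omega⟩
  constructor
  · rintro ⟨ψ, hsurj, hγ⟩
    refine ⟨by simpa [hγ, ← ofAdd_sum] using SurfaceGroup.prod_map_gamma ψ, ?_⟩
    rcases Nat.eq_zero_or_pos g' with rfl | hg'
    · right
      have hψγ : ψ ∘ SurfaceGroup.gamma = Multiplicative.ofAdd ∘ h := funext hγ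
      rw [← Nat.coprime_iff_gcd_eq_one, ← ZMod.closure_range_eq_top_iff,
        ← Subgroup.closure_range_ofAdd_eq_top_iff, ← hψγ,
        ← SurfaceGroup.range_eq_closure_range_gamma, MonoidHom.range_eq_top]
      exact hsurj
    · exact Or.inl hg'
  · rintro ⟨hsum, hgen⟩
    let ψ : SurfaceGroup g' b →* Multiplicative (ZMod m) :=
      SurfaceGroup.lift (Sum.elim (Sum.elim (fun _ => .ofAdd 1) 1) (.ofAdd ∘ h))
        (by simpa [← ofAdd_sum] using hsum)
    have hγ k : ψ (SurfaceGroup.gamma k) = .ofAdd (h k) := SurfaceGroup.lift_of _ _ _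
    refine ⟨ψ, ?_, hγ⟩
    rcases hgen with hg' | hcop
    · intro y
      refine ⟨PresentedGroup.of (.inl (.inl ⟨0, hg'⟩)) ^ (ZMod.cast y.toAdd : ℤ), ?_⟩
      simp [ψ, ← ofAdd_zsmul]
    · rw [← MonoidHom.range_eq_top, eq_top_iff, ← (Subgroup.closure_range_ofAdd_eq_top_iff h).2
        ((ZMod.closure_range_eq_top_iff h).2 hcop), Subgroup.closure_le]
      rintro _ ⟨k, rfl⟩
      exact ⟨_, hγ k⟩
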